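/- Let E be a nonempty finite type, l, L natural numbers with 1 ≤ l ≤ L, and W a finite set of words over E with |W| = k ≥ 1, each word having length at least l and at most L. Let X_W be the set of all x : ℤ → E such that every finite window (x(a), x(a+1), …, x(b)) (a ≤ b in ℤ) is an infix of the concatenation of some finite sequence of words from W. Then X_W is a closed subset of E^ℤ (product topology, E discrete), invariant under the shift S ((Sx)(n) = x(n+1)), and the topological entropy of S restricted to X_W is at most (log k)/l. -/

import Mathlib

/-!
A window of length `N` of a point of `X_W` lies in a concatenation of words of `W`. Dropping the
words that end before it leaves an offset `j < L`, and since words have length at least `l`, the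
next `(N + L) / l + 1` words (padded with an arbitrary word of `W`) already contain it. So there
are at most `L * k ^ ((N + L) / l + 1)` windows of length `N`. Points with the same window on
`[-m, n + m]` stay `n` steps within the entourage "agree on `[-m, m]`", and these entourages refine
every entourage of `E^ℤ`; hence each entourage has entropy at most
`lim (1 / n) log (L * k ^ ((n + 2m + 1 + L) / l + 1)) = log k / l`.
-/

open Set Filter Topology Uniformity Dynamics ExpGrowth
open scoped ENNReal

/-- The shift homeomorphism on `E^ℤ`. -/
def shiftHomeo (E : Type*) [TopologicalSpace E] : (ℤ → E) ≃ₜ (ℤ → E) where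
  toFun x := fun k => x (k + 1)
  invFun x := fun k => x (k - 1)
  left_inv x := by funext k; simp
  right_inv x := by funext k; simp
  continuous_toFun := continuous_pi fun k => continuous_apply (k + 1)
  continuous_invFun := continuous_pi fun k => continuous_apply (k - 1)

/-- The finite window `(x a, x (a+1), …, x b)` of `x : ℤ → E`. -/
def window {E : Type*} (x : ℤ → E) (a b : ℤ) : List E :=
  List.ofFn fun i : Fin ((b - a).toNat + 1) => x (a + (i.val : ℤ))

/-- The subshift of all bisequences whose finite windows are infixes of
concatenations of words from `W`. -/
def subshiftOf {E : Type*} (W : Finset (List E)) : Set (ℤ → E) :=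
  {x : ℤ → E | ∀ a b : ℤ, a ≤ b →
    ∃ us : List (List E), (∀ u ∈ us, u ∈ W) ∧ window x a b <:+: us.flatten}

namespace List

variable {α : Type*}

theorem exists_suffix_drop_flatten_eq {L : ℕ} {vs : List (List α)}
    (hL : ∀ v ∈ vs, v.length ≤ L) {j : ℕ} (hj : j < vs.flatten.length) :
    ∃ vs', vs' <:+ vs ∧ ∃ j' < L, vs.flatten.drop j = vs'.flatten.drop j' := by
  induction vs generalizing j with
  | nil => simp at hj
  | cons v vs ih =>
    by_cases hjv : j < v.length
    · exact ⟨v :: vs, suffix_refl _, j, hjv.trans_le (hL v mem_cons_self), rfl⟩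
    · have hj' : j - v.length < vs.flatten.length := by
        rw [flatten_cons, length_append] at hj; omega
      obtain ⟨vs', hsuf, j', hj'L, hdrop⟩ := ih (fun u hu => hL u (mem_cons_of_mem v hu)) hj'
      refine ⟨vs', hsuf.trans (suffix_cons v vs), j', hj'L, ?_⟩
      rw [flatten_cons, drop_append, drop_eq_nil_of_le (by omega), nil_append, hdrop]

theorem IsPrefix.take_drop_eq {p q : List α} (h : p <+: q) {i j : ℕ} (hij : i + j ≤ p.length) :
    (q.drop i).take j = (p.drop i).take j := by
  obtain ⟨t, rfl⟩ := h
  rw [drop_append, take_append_of_le_length (by simp; omega)]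

end List

namespace Dynamics

variable {X β : Type*} [Fintype β] {T : X → X} {U : SetRel X X} {n : ℕ}

theorem coverMincard_univ_le_card (φ : X → β)
    (hφ : ∀ x y, φ x = φ y → (x, y) ∈ dynEntourage T U n) :
    coverMincard T univ U n ≤ Fintype.card β := by
  classical
  let s : Finset X := Finset.univ.image (rangeSplitting φ)
  have hs : IsDynCoverOf T univ U n s := fun x _ =>
    ⟨_, Finset.mem_image_of_mem _ (Finset.mem_univ ⟨φ x, mem_range_self x⟩),
      hφ _ _ (apply_rangeSplitting φ ⟨φ x, mem_range_self x⟩).symm⟩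
  calc coverMincard T univ U n ≤ s.card := hs.coverMincard_le_card
    _ ≤ Fintype.card β := by
      have : s.card ≤ Fintype.card (range φ) := Finset.card_image_le.trans_eq Finset.card_univ
      exact_mod_cast this.trans (set_fintype_card_le_univ _)

end Dynamics

theorem expGrowthSup_pow_add_div_le {k : ℕ} (hk : 1 ≤ k) (l d : ℕ) :
    expGrowthSup (fun n => (k : ℝ≥0∞) ^ ((n + d) / l)) ≤ ((Real.log k / l : ℝ) : EReal) := by
  have hk' : (1 : ℝ≥0∞) ≤ k := by exact_mod_cast hk
  have hbound : ∀ n : ℕ, (k : ℝ≥0∞) ^ ((n + d) / l) ≤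
      (k : ℝ≥0∞) ^ (d / l + 1) * ((k : ℝ≥0∞) ^ (l : ℝ)⁻¹) ^ n := fun n =>
    calc (k : ℝ≥0∞) ^ ((n + d) / l) ≤ (k : ℝ≥0∞) ^ (n / l + (d / l + 1)) :=
          pow_le_pow_right₀ hk' (by have := Nat.add_div_le_div_add_div_add_one n d l; omega)
      _ = (k : ℝ≥0∞) ^ (d / l + 1) * (k : ℝ≥0∞) ^ (n / l) := by rw [pow_add, mul_comm]
      _ ≤ (k : ℝ≥0∞) ^ (d / l + 1) * ((k : ℝ≥0∞) ^ (l : ℝ)⁻¹) ^ n := by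
          refine mul_le_mul_right ?_ _
          rw [← ENNReal.rpow_natCast, ← ENNReal.rpow_natCast, ← ENNReal.rpow_mul, ← div_eq_inv_mul]
          exact ENNReal.rpow_le_rpow_of_exponent_le hk' Nat.cast_div_le
  calc expGrowthSup (fun n => (k : ℝ≥0∞) ^ ((n + d) / l))
      ≤ expGrowthSup (fun n => ((k : ℝ≥0∞) ^ (l : ℝ)⁻¹) ^ n) :=
        expGrowthSup_le_of_eventually_le (by simp) (Eventually.of_forall hbound)
    _ = _ := by
        rw [expGrowthSup_pow, ENNReal.log_rpow, ← ENNReal.ofReal_natCast,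
          ENNReal.log_ofReal_of_pos (by positivity), div_eq_inv_mul]
        rfl

theorem exists_finset_eqOn_subset_of_mem_uniformity {ι β : Type*} [UniformSpace β]
    {U : SetRel (ι → β) (ι → β)} (hU : U ∈ 𝓤 (ι → β)) :
    ∃ s : Finset ι, {p : (ι → β) × (ι → β) | ∀ i ∈ s, p.1 i = p.2 i} ⊆ U := by
  rw [Pi.uniformity, Filter.mem_iInf] at hU
  obtain ⟨I, hI, V, hV, rfl⟩ := hU
  refine ⟨hI.toFinset, fun p hp => mem_iInter.2 fun i => ?_⟩
  obtain ⟨t, ht, hsub⟩ := hV i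
  exact hsub (by simpa [hp i (hI.mem_toFinset.2 i.2)] using refl_mem_uniformity ht)

section Window

variable {E : Type*}

@[simp]
theorem length_window (x : ℤ → E) (a b : ℤ) : (window x a b).length = (b - a).toNat + 1 := by
  simp [window]

theorem window_comp_add (x : ℤ → E) (c a b : ℤ) :
    window (fun i => x (i + c)) a b = window x (a + c) (b + c) := by
  rw [window, window, show b + c - (a + c) = b - a by ring]
  congr! 2 with i
  exact congrArg x (add_right_comm _ _ _)

theorem apply_eq_of_window_eq {x y : ℤ → E} {a b : ℤ} (h : window x a b = window y a b) {i : ℤ}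
    (hai : a ≤ i) (hib : i ≤ b) : x i = y i := by
  have := congrFun (List.ofFn_inj.1 h) ⟨(i - a).toNat, by omega⟩
  rwa [Int.toNat_of_nonneg (by omega), add_sub_cancel] at this

end Window

open List in
theorem exists_take_drop_flatten_eq_of_infix {E : Type*} {W : Finset (List E)} {l L N : ℕ}
    (hl : 0 < l) (hlen : ∀ w ∈ W, l ≤ w.length ∧ w.length ≤ L) (hW : W.Nonempty)
    (hN : 0 < N) {w : List E} (hw : w.length = N)
    (h : ∃ vs : List (List E), (∀ u ∈ vs, u ∈ W) ∧ w <:+: vs.flatten) :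
    ∃ (j : Fin L) (f : Fin ((N + L) / l + 1) → W),
      w = ((ofFn fun i => (f i : List E)).flatten.drop j).take N := by
  subst hw
  obtain ⟨vs, hvsW, p, t, hpt⟩ := h
  obtain ⟨w₀, hw₀⟩ := hW
  set R := (w.length + L) / l + 1
  have hp : p.length < vs.flatten.length := by
    rw [← hpt, length_append, length_append]; omega
  obtain ⟨vs', hsuf, j, hjL, hdrop⟩ :=
    exists_suffix_drop_flatten_eq (fun v hv => (hlen v (hvsW v hv)).2) hp
  have hwt : vs'.flatten.drop j = w ++ t := by rw [← hdrop, ← hpt, append_assoc, drop_left]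
  have hjw : j + w.length ≤ vs'.flatten.length := by
    have hlen_eq := congrArg length hwt
    rw [length_drop, length_append] at hlen_eq
    omega
  set us := (vs' ++ replicate R w₀).take R
  have husW : ∀ u ∈ us, u ∈ W := by
    intro u hu
    rcases mem_append.1 ((take_subset _ _) hu) with hu | hu
    · exact hvsW u (hsuf.subset hu)
    · rwa [eq_of_mem_replicate hu]
  have hus : us.length = R := length_take_of_le (by simp)
  -- every word has length at least `l`, so `R` words cover the offset `j < L` plus `w`
  have hRl : j + w.length ≤ us.flatten.length :=
    calc j + w.length ≤ R * l := by
          have := Nat.lt_div_mul_add (a := w.length + L) hl; rw [add_mul, one_mul]; omega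
      _ ≤ us.flatten.length := by
          rw [length_flatten, ← hus, ← smul_eq_mul, ← length_map (f := length)]
          exact card_nsmul_le_sum _ _ (by simpa using fun u hu => (hlen u (husW u hu)).1)
  refine ⟨⟨j, hjL⟩, fun i => ⟨us[(i : ℕ)], husW _ (getElem_mem _)⟩, ?_⟩
  have hofFn : (ofFn fun i : Fin R => us[(i : ℕ)]) = us :=
    ext_getElem (by rw [length_ofFn, hus]) fun i _ _ => List.getElem_ofFn ..
  calc w = (vs'.flatten.drop j).take w.length := by rw [hwt, take_left]
    _ = ((vs' ++ replicate R w₀).flatten.drop j).take w.length := by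
        rw [flatten_append]; exact ((prefix_append _ _).take_drop_eq hjw).symm
    _ = (us.flatten.drop j).take w.length := (take_prefix _ _).flatten.take_drop_eq hRl
    _ = _ := by rw [hofFn]

section Subshift

variable {E : Type*} {W : Finset (List E)}

theorem comp_add_mem_subshiftOf {x : ℤ → E} (hx : x ∈ subshiftOf W) (c : ℤ) :
    (fun i => x (i + c)) ∈ subshiftOf W := by
  intro a b hab
  rw [window_comp_add]
  exact hx _ _ (by omega)

theorem shiftHomeo_image_subshiftOf [TopologicalSpace E] :
    shiftHomeo E '' subshiftOf W = subshiftOf W := by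
  refine Subset.antisymm (image_subset_iff.2 fun x hx => comp_add_mem_subshiftOf hx 1)
    fun x hx => ⟨(shiftHomeo E).symm x, ?_, (shiftHomeo E).apply_symm_apply x⟩
  exact comp_add_mem_subshiftOf hx (-1)

theorem isClosed_subshiftOf [TopologicalSpace E] [DiscreteTopology E] (W : Finset (List E)) :
    IsClosed (subshiftOf W) := by
  have hwindow : ∀ a b : ℤ, IsClosed {x : ℤ → E |
      ∃ us : List (List E), (∀ u ∈ us, u ∈ W) ∧ window x a b <:+: us.flatten} := fun a b =>
    (isClosed_discrete {v : Fin _ → E | ∃ us : List (List E), (∀ u ∈ us, u ∈ W) ∧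
      List.ofFn v <:+: us.flatten}).preimage
      (f := fun (x : ℤ → E) (i : Fin ((b - a).toNat + 1)) => x (a + i))
      (continuous_pi fun i => continuous_apply _)
  simpa only [subshiftOf, ofPred_forall] using
    isClosed_iInter fun a => isClosed_iInter fun b => isClosed_iInter fun _ : a ≤ b => hwindow a b

end Subshift

def agreeRel (E : Type*) (m : ℕ) : SetRel (ℤ → E) (ℤ → E) :=
  {p | ∀ i : ℤ, i.natAbs ≤ m → p.1 i = p.2 i}

section Entropy

variable {E : Type*} {W : Finset (List E)}

theorem exists_agreeRel_subset [UniformSpace E] {U : SetRel (ℤ → E) (ℤ → E)}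
    (hU : U ∈ 𝓤 (ℤ → E)) : ∃ m, agreeRel E m ⊆ U := by
  obtain ⟨s, hs⟩ := exists_finset_eqOn_subset_of_mem_uniformity hU
  exact ⟨s.sup Int.natAbs, fun p hp => hs fun i hi => hp i (Finset.le_sup hi)⟩

theorem shiftHomeo_iterate_apply [TopologicalSpace E] (x : ℤ → E) (j : ℕ) (i : ℤ) :
    (shiftHomeo E)^[j] x i = x (i + j) := by
  induction j generalizing x with
  | zero => simp
  | succ j ih =>
    rw [Function.iterate_succ_apply, ih]
    change x (i + j + 1) = _
    rw [Nat.cast_succ, add_assoc]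

theorem mem_dynEntourage_of_window_eq [TopologicalSpace E]
    (h : MapsTo (shiftHomeo E) (subshiftOf W) (subshiftOf W)) {x y : subshiftOf W} {m n : ℕ}
    (hxy : window x.1 (-m) (n + m) = window y.1 (-m) (n + m)) :
    (x, y) ∈
      dynEntourage (h.restrict _ _ _) (Prod.map Subtype.val Subtype.val ⁻¹' agreeRel E m) n := by
  refine mem_dynEntourage.2 fun j hj i hi => ?_
  rw [MapsTo.iterate_restrict]
  change (shiftHomeo E)^[j] x.1 i = (shiftHomeo E)^[j] y.1 i
  rw [shiftHomeo_iterate_apply, shiftHomeo_iterate_apply]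
  exact apply_eq_of_window_eq hxy (by omega) (by omega)

theorem coverMincard_restrict_shiftHomeo_le [TopologicalSpace E] {l L : ℕ} (hl : 0 < l)
    (hlen : ∀ w ∈ W, l ≤ w.length ∧ w.length ≤ L) (hW : W.Nonempty)
    (h : MapsTo (shiftHomeo E) (subshiftOf W) (subshiftOf W)) (m n : ℕ) :
    coverMincard (h.restrict _ _ _) univ (Prod.map Subtype.val Subtype.val ⁻¹' agreeRel E m) n ≤
      L * W.card ^ ((n + 2 * m + 1 + L) / l + 1) := by
  have hcode (x : subshiftOf W) : ∃ (j : Fin L) (f : Fin ((n + 2 * m + 1 + L) / l + 1) → W),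
      window x.1 (-m) (n + m) =
        ((List.ofFn fun i => (f i : List E)).flatten.drop j).take (n + 2 * m + 1) :=
    exists_take_drop_flatten_eq_of_infix hl hlen hW (by omega) (by simp; omega)
      (x.2 (-m) (n + m) (by omega))
  choose j f hjf using hcode
  calc coverMincard _ univ _ n
      ≤ Fintype.card (Fin L × (Fin ((n + 2 * m + 1 + L) / l + 1) → W)) :=
        coverMincard_univ_le_card (fun x => (j x, f x)) fun x y hxy => by
          obtain ⟨hj, hf⟩ := Prod.mk_inj.1 hxy
          exact mem_dynEntourage_of_window_eq h (by rw [hjf, hjf, hj, hf])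
    _ = L * W.card ^ ((n + 2 * m + 1 + L) / l + 1) := by simp

theorem coverEntropy_restrict_shiftHomeo_le [UniformSpace E] {l L : ℕ} (hl : 0 < l)
    (hlen : ∀ w ∈ W, l ≤ w.length ∧ w.length ≤ L) (hW : W.Nonempty)
    (h : MapsTo (shiftHomeo E) (subshiftOf W) (subshiftOf W)) :
    coverEntropy (h.restrict _ _ _) univ ≤ ((Real.log W.card / l : ℝ) : EReal) := by
  refine iSup₂_le fun U hU => ?_
  rw [uniformity_setCoe] at hU
  obtain ⟨t, ht, htU⟩ := hU
  obtain ⟨m, hm⟩ := exists_agreeRel_subset ht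
  set d := 2 * m + 1 + L
  calc coverEntropyEntourage _ univ U
      ≤ coverEntropyEntourage _ univ (Prod.map Subtype.val Subtype.val ⁻¹' agreeRel E m) :=
        coverEntropyEntourage_antitone _ _ ((preimage_mono hm).trans htU)
    _ ≤ expGrowthSup fun n => (L * W.card : ℝ≥0∞) * (W.card : ℝ≥0∞) ^ ((n + d) / l) :=
        expGrowthSup_monotone fun n => by
          have := ENat.toENNReal_le.2 (coverMincard_restrict_shiftHomeo_le hl hlen hW h m n)
          simpa [d, pow_succ, add_assoc, mul_assoc, mul_comm] using this
    _ ≤ expGrowthSup fun n => (W.card : ℝ≥0∞) ^ ((n + d) / l) :=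
        expGrowthSup_le_of_eventually_le (by finiteness) (Eventually.of_forall fun n => le_rfl)
    _ ≤ _ := expGrowthSup_pow_add_div_le hW.card_pos _ _

end Entropy

theorem subshift_entropy_le_general
    (E : Type*) [UniformSpace E] [DiscreteTopology E]
    (l L : ℕ) (hl : 1 ≤ l)
    (W : Finset (List E)) (k : ℕ) (hk : W.card = k) (hk1 : 1 ≤ k)
    (hlen : ∀ w ∈ W, l ≤ w.length ∧ w.length ≤ L) :
    IsClosed (subshiftOf W) ∧
    (shiftHomeo E) '' subshiftOf W = subshiftOf W ∧
    ∀ h : Set.MapsTo (shiftHomeo E) (subshiftOf W) (subshiftOf W),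
      Dynamics.coverEntropy (Set.MapsTo.restrict _ _ _ h) Set.univ ≤
        ((Real.log k / l : ℝ) : EReal) := by
  refine ⟨isClosed_subshiftOf W, shiftHomeo_image_subshiftOf, fun h => ?_⟩
  subst hk
  exact coverEntropy_restrict_shiftHomeo_le hl hlen (Finset.card_pos.1 hk1) h

/-- if `W` consists of `k ≥ 1` words of length between `l ≥ 1`
and `L`, then the associated subshift `X_W ⊆ E^ℤ` is closed, shift-invariant,
and the restricted shift has topological entropy at most `(log k)/l`. -/
theorem subshift_entropy_le
    (E : Type*) [Fintype E] [Nonempty E] [UniformSpace E] [DiscreteTopology E]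
    (l L : ℕ) (hl : 1 ≤ l) (hlL : l ≤ L)
    (W : Finset (List E)) (k : ℕ) (hk : W.card = k) (hk1 : 1 ≤ k)
    (hlen : ∀ w ∈ W, l ≤ w.length ∧ w.length ≤ L) :
    IsClosed (subshiftOf W) ∧
    (shiftHomeo E) '' subshiftOf W = subshiftOf W ∧
    ∀ h : Set.MapsTo (shiftHomeo E) (subshiftOf W) (subshiftOf W),
      Dynamics.coverEntropy (Set.MapsTo.restrict _ _ _ h) Set.univ ≤
        ((Real.log k / l : ℝ) : EReal) :=
  subshift_entropy_le_general E l L hl W k hk hk1 hlen
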